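/- arXiv:2310.02394 — 6 statements merged into one kernel-verified Lean document; each statement's English description precedes it below -/
import Mathlib

section
/- Under the missing-data model where at most a δ share of each firm's intermediate input data is missing (0 ≤ δ < 1), the influence vectors satisfy ‖v_U - v_W‖₁ ≤ (δ/α)·(1-α)(2-δ)/(1-δ). -/
open Matrix BigOperators

/-- The influence vector of an input-output matrix `W` with labor share `α`. -/
noncomputable def influence {n : ℕ} (α : ℝ) (W : Matrix (Fin n) (Fin n) ℝ) : Fin n → ℝ :=
  (α / (n : ℝ)) • ((1 - (1 - α) • Wᵀ)⁻¹ *ᵥ fun _ => 1)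

/-!
Write `N_W = (1 - (1 - α) W)⁻¹`, so that `v_W = (α / n) 𝟏ᵀ N_W`. For a row-stochastic `M` and
`0 ≤ β < 1`, a minimum principle shows that `(1 - β M) v ≥ 0` forces `v ≥ 0`; hence `1 - β M` is
invertible and its inverse is entrywise nonnegative with row sums `(1 - β)⁻¹`, so `v_W` is a
probability vector. The resolvent identity `N_U - N_W = (1 - α) N_U (U - W) N_W` turns into
`v_U - v_W = (1 - α) v_U (U - W) N_W`, whence `‖v_U - v_W‖₁ ≤ (1 - α) ε / α` when every row of
`U - W` has `ℓ¹`-norm at most `ε`. Renormalising a row after deleting a share `d_i` of it moves it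
by at most `2 d_i ≤ 2 δ` in `ℓ¹`, and `2 δ ≤ δ (2 - δ) / (1 - δ)`.
-/

open Finset

namespace Matrix

section Resolvent

variable {ι R : Type*} [Fintype ι] [DecidableEq ι] [Field R] [LinearOrder R]
  [IsStrictOrderedRing R] {M : Matrix ι ι R} {β : R}

lemma le_mulVec_of_mem_rowStochastic (hM : M ∈ rowStochastic R ι) {v : ι → R} {i : ι}
    (hi : ∀ j, v i ≤ v j) : v i ≤ (M *ᵥ v) i :=
  calc v i = ∑ j, M i j * v i := by rw [← sum_mul, sum_row_of_mem_rowStochastic hM, one_mul]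
    _ ≤ ∑ j, M i j * v j :=
      sum_le_sum fun j _ => mul_le_mul_of_nonneg_left (hi j) (nonneg_of_mem_rowStochastic hM)

/-- At a minimal coordinate `i` of `v`, `(1 - β) v i ≥ v i - β (M v) i ≥ 0`. -/
lemma nonneg_of_nonneg_one_sub_smul_mulVec (hM : M ∈ rowStochastic R ι) (hβ0 : 0 ≤ β)
    (hβ1 : β < 1) {v : ι → R} (hv : 0 ≤ (1 - β • M) *ᵥ v) : 0 ≤ v := by
  intro j
  have : Nonempty ι := ⟨j⟩
  obtain ⟨i, hi⟩ := Finite.exists_min v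
  have hvi : 0 ≤ v i - β * (M *ᵥ v) i := by
    simpa [sub_mulVec, smul_mulVec] using hv i
  have hMv := le_mulVec_of_mem_rowStochastic hM hi
  have : 0 ≤ v i := by nlinarith
  exact this.trans (hi j)

lemma isUnit_one_sub_smul (hM : M ∈ rowStochastic R ι) (hβ0 : 0 ≤ β) (hβ1 : β < 1) :
    IsUnit (1 - β • M) := by
  have hle : ∀ v w, (1 - β • M) *ᵥ v = (1 - β • M) *ᵥ w → v ≤ w := fun v w h =>
    sub_nonneg.1 <| nonneg_of_nonneg_one_sub_smul_mulVec hM hβ0 hβ1 <| by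
      rw [mulVec_sub, h, sub_self]
  exact mulVec_injective_iff_isUnit.1 fun v w h => le_antisymm (hle v w h) (hle w v h.symm)

lemma inv_one_sub_smul_nonneg (hM : M ∈ rowStochastic R ι) (hβ0 : 0 ≤ β) (hβ1 : β < 1)
    (i j : ι) : 0 ≤ (1 - β • M)⁻¹ i j := by
  have hA := (isUnit_iff_isUnit_det _).1 (isUnit_one_sub_smul hM hβ0 hβ1)
  have := nonneg_of_nonneg_one_sub_smul_mulVec hM hβ0 hβ1
    (v := (1 - β • M)⁻¹ *ᵥ Pi.single j 1) (by
      rw [mulVec_mulVec, mul_nonsing_inv _ hA, one_mulVec]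
      exact Pi.single_nonneg.2 zero_le_one)
  simpa [mulVec_single_one] using this i

lemma inv_one_sub_smul_mulVec_one (hM : M ∈ rowStochastic R ι) (hβ0 : 0 ≤ β) (hβ1 : β < 1) :
    (1 - β • M)⁻¹ *ᵥ 1 = (1 - β)⁻¹ • 1 := by
  have hA := (isUnit_iff_isUnit_det _).1 (isUnit_one_sub_smul hM hβ0 hβ1)
  have h1 : (1 - β • M) *ᵥ 1 = (1 - β) • 1 := by
    rw [sub_mulVec, smul_mulVec, one_mulVec, one_vecMul_of_mem_rowStochastic hM, sub_smul,
      one_smul]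
  have hβ : 1 - β ≠ 0 := sub_ne_zero.2 hβ1.ne'
  calc (1 - β • M)⁻¹ *ᵥ 1 = (1 - β)⁻¹ • (1 - β • M)⁻¹ *ᵥ ((1 - β • M) *ᵥ 1) := by
        rw [h1, mulVec_smul, smul_smul, inv_mul_cancel₀ hβ, one_smul]
    _ = (1 - β)⁻¹ • 1 := by rw [mulVec_mulVec, nonsing_inv_mul _ hA, one_mulVec]

end Resolvent

lemma sum_abs_vecMul_le {m n R : Type*} [Fintype m] [Fintype n] [CommRing R] [LinearOrder R]
    [IsStrictOrderedRing R] (x : m → R) (A : Matrix m n R) {C : R}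
    (hA : ∀ i, ∑ j, |A i j| ≤ C) : ∑ j, |(x ᵥ* A) j| ≤ (∑ i, |x i|) * C :=
  calc ∑ j, |(x ᵥ* A) j| ≤ ∑ j, ∑ i, |x i| * |A i j| :=
        sum_le_sum fun j _ => (abs_sum_le_sum_abs _ _).trans_eq (by simp only [abs_mul])
    _ = ∑ i, |x i| * ∑ j, |A i j| := by rw [sum_comm]; simp only [mul_sum]
    _ ≤ ∑ i, |x i| * C := sum_le_sum fun i _ => mul_le_mul_of_nonneg_left (hA i) (abs_nonneg _)
    _ = (∑ i, |x i|) * C := (sum_mul ..).symm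

end Matrix

section Influence

variable {n : ℕ} {α : ℝ}

lemma influence_eq_vecMul (α : ℝ) (W : Matrix (Fin n) (Fin n) ℝ) :
    influence α W = (α / n) • ((1 : Fin n → ℝ) ᵥ* (1 - (1 - α) • W)⁻¹) := by
  have hT : (1 : Matrix (Fin n) (Fin n) ℝ) - (1 - α) • Wᵀ = (1 - (1 - α) • W)ᵀ := by
    rw [transpose_sub, transpose_one, transpose_smul]
  rw [influence, hT, ← transpose_nonsing_inv, mulVec_transpose]
  rfl

lemma influence_sub_influence {W U : Matrix (Fin n) (Fin n) ℝ}
    (hW : IsUnit (1 - (1 - α) • W)) (hU : IsUnit (1 - (1 - α) • U)) :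
    influence α U - influence α W =
      (1 - α) • (influence α U ᵥ* ((U - W) * (1 - (1 - α) • W)⁻¹)) := by
  have hres : (1 - (1 - α) • U)⁻¹ - (1 - (1 - α) • W)⁻¹ =
      (1 - α) • ((1 - (1 - α) • U)⁻¹ * (U - W) * (1 - (1 - α) • W)⁻¹) := by
    have hdiff : (1 - (1 - α) • W) - (1 - (1 - α) • U) = (1 - α) • (U - W) := by
      rw [smul_sub]; abel
    rw [inv_sub_inv (iff_of_true hU hW), hdiff, Matrix.mul_smul, Matrix.smul_mul]
  rw [influence_eq_vecMul, influence_eq_vecMul, ← smul_sub, ← vecMul_sub, hres, vecMul_smul,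
    smul_vecMul, vecMul_vecMul, Matrix.mul_assoc, smul_comm]

lemma influence_nonneg {W : Matrix (Fin n) (Fin n) ℝ} (hW : W ∈ rowStochastic ℝ (Fin n))
    (hα0 : 0 < α) (hα1 : α ≤ 1) (i : Fin n) : 0 ≤ influence α W i := by
  rw [influence_eq_vecMul, Pi.smul_apply, smul_eq_mul]
  simp only [vecMul, dotProduct]
  exact mul_nonneg (by positivity) <| sum_nonneg fun k _ => mul_nonneg zero_le_one <|
    inv_one_sub_smul_nonneg (β := 1 - α) hW (by linarith) (by linarith) k i

lemma sum_influence_le_one {W : Matrix (Fin n) (Fin n) ℝ} (hW : W ∈ rowStochastic ℝ (Fin n))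
    (hα0 : 0 < α) (hα1 : α ≤ 1) : ∑ i, influence α W i ≤ 1 := by
  have hsum : ∑ i, influence α W i = α / n * (n * α⁻¹) := by
    rw [← dotProduct_one, influence_eq_vecMul, smul_dotProduct, ← dotProduct_mulVec,
      inv_one_sub_smul_mulVec_one hW (by linarith) (by linarith), sub_sub_cancel,
      dotProduct_smul, dotProduct_one]
    simp [mul_comm]
  rcases eq_or_ne (n : ℝ) 0 with hn | hn
  · simp [hsum, hn]
  · rw [hsum, div_mul_eq_mul_div, mul_div_assoc, mul_div_cancel_left₀ _ hn, mul_inv_cancel₀ hα0.ne']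

theorem sum_abs_influence_sub_le {W U : Matrix (Fin n) (Fin n) ℝ}
    (hW : W ∈ rowStochastic ℝ (Fin n)) (hU : U ∈ rowStochastic ℝ (Fin n))
    (hα0 : 0 < α) (hα1 : α ≤ 1) {ε : ℝ} (hε0 : 0 ≤ ε) (hε : ∀ i, ∑ j, |U i j - W i j| ≤ ε) :
    ∑ i, |influence α U i - influence α W i| ≤ (1 - α) * ε / α := by
  have hβ0 : 0 ≤ 1 - α := by linarith
  have hβ1 : 1 - α < 1 := by linarith
  set N := (1 - (1 - α) • W)⁻¹
  have hN : ∀ m, ∑ i, |N m i| ≤ α⁻¹ := fun m => le_of_eq <|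
    calc ∑ i, |N m i| = (N *ᵥ 1) m := by
          simp [abs_of_nonneg (inv_one_sub_smul_nonneg hW hβ0 hβ1 m _), mulVec, dotProduct, N]
      _ = α⁻¹ := by simp [N, inv_one_sub_smul_mulVec_one hW hβ0 hβ1]
  have hrow : ∀ k, ∑ i, |((U - W) * N) k i| ≤ ε * α⁻¹ := fun k =>
    (sum_abs_vecMul_le ((U - W) k) N hN).trans (by gcongr; exact hε k)
  have hvU : ∑ i, |influence α U i| ≤ 1 := by
    simpa only [abs_of_nonneg (influence_nonneg hU hα0 hα1 _)] using
      sum_influence_le_one hU hα0 hα1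
  have hdiff := influence_sub_influence (isUnit_one_sub_smul hW hβ0 hβ1)
    (isUnit_one_sub_smul hU hβ0 hβ1)
  calc ∑ i, |influence α U i - influence α W i|
        = (1 - α) * ∑ i, |(influence α U ᵥ* ((U - W) * N)) i| := by
          simp only [← Pi.sub_apply, hdiff, Pi.smul_apply, smul_eq_mul, abs_mul,
            abs_of_nonneg hβ0, mul_sum, N]
    _ ≤ (1 - α) * ((∑ i, |influence α U i|) * (ε * α⁻¹)) := by
          gcongr; exact sum_abs_vecMul_le _ _ hrow
    _ ≤ (1 - α) * (ε * α⁻¹) :=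
          mul_le_mul_of_nonneg_left (mul_le_of_le_one_left (by positivity) hvU) hβ0
    _ = (1 - α) * ε / α := by ring

end Influence

section MissingData

variable {ι : Type*} [Fintype ι] [DecidableEq ι] {W U : Matrix ι ι ℝ} {c : ι → ι → ℝ}
  {d : ι → ℝ}

lemma mem_rowStochastic_of_missing (hW : W ∈ rowStochastic ℝ ι) (hcw : ∀ i j, c i j ≤ W i j)
    (hcd : ∀ i, ∑ j, c i j = d i) (hd1 : ∀ i, d i < 1)
    (hU : ∀ i j, U i j = (W i j - c i j) / (1 - d i)) : U ∈ rowStochastic ℝ ι := by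
  refine mem_rowStochastic_iff_sum.2 ⟨fun i j => ?_, fun i => ?_⟩
  · rw [hU]
    exact div_nonneg (sub_nonneg.2 (hcw i j)) (sub_pos.2 (hd1 i)).le
  · simp_rw [hU, ← sum_div, sum_sub_distrib, sum_row_of_mem_rowStochastic hW, hcd]
    exact div_self (sub_pos.2 (hd1 i)).ne'

lemma sum_abs_sub_le_of_missing (hW : W ∈ rowStochastic ℝ ι) (hc0 : ∀ i j, 0 ≤ c i j)
    (hcw : ∀ i j, c i j ≤ W i j) (hcd : ∀ i, ∑ j, c i j = d i) (hd1 : ∀ i, d i < 1)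
    (hU : ∀ i j, U i j = (W i j - c i j) / (1 - d i)) (i : ι) :
    ∑ j, |U i j - W i j| ≤ 2 * d i := by
  have hpos : 0 < 1 - d i := sub_pos.2 (hd1 i)
  have hd0 : 0 ≤ d i := hcd i ▸ sum_nonneg fun j _ => hc0 i j
  have hentry : ∀ j, |U i j - W i j| ≤ (d i * (W i j - c i j) + (1 - d i) * c i j) / (1 - d i) :=
    fun j => by
      have hUW : U i j - W i j = (d i * (W i j - c i j) - (1 - d i) * c i j) / (1 - d i) := by
        rw [hU]; field_simp; ring
      rw [hUW, abs_div, abs_of_pos hpos]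
      gcongr
      refine (abs_sub _ _).trans_eq ?_
      rw [abs_of_nonneg (mul_nonneg hd0 (sub_nonneg.2 (hcw i j))),
        abs_of_nonneg (mul_nonneg hpos.le (hc0 i j))]
  calc ∑ j, |U i j - W i j|
      ≤ ∑ j, (d i * (W i j - c i j) + (1 - d i) * c i j) / (1 - d i) :=
        sum_le_sum fun j _ => hentry j
    _ = 2 * d i := by
        rw [← sum_div, sum_add_distrib, ← mul_sum, ← mul_sum, sum_sub_distrib,
          sum_row_of_mem_rowStochastic hW, hcd]
        field_simp
        ring

end MissingData

/-- If at most a `δ` share of each firm's intermediate input data is missing, then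
`‖v_U - v_W‖₁ ≤ (δ/α)·(1-α)(2-δ)/(1-δ)`. -/
theorem influence_missing_data_bound (n : ℕ) (α δ : ℝ)
    (hα0 : 0 < α) (hα1 : α < 1) (hδ0 : 0 ≤ δ) (hδ1 : δ < 1)
    (W U : Matrix (Fin n) (Fin n) ℝ) (c : Fin n → Fin n → ℝ) (d : Fin n → ℝ)
    (hWnn : ∀ i j, 0 ≤ W i j) (hWrow : ∀ i, ∑ j, W i j = 1)
    (hd : ∀ i, d i ≤ δ)
    (hc0 : ∀ i j, 0 ≤ c i j) (hcw : ∀ i j, c i j ≤ W i j)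
    (hcd : ∀ i, ∑ j, c i j = d i)
    (hU : ∀ i j, U i j = (W i j - c i j) / (1 - d i)) :
    ∑ i, |influence α U i - influence α W i| ≤ (δ / α) * ((1 - α) * (2 - δ) / (1 - δ)) := by
  have hd1 : ∀ i, d i < 1 := fun i => (hd i).trans_lt hδ1
  have hW : W ∈ rowStochastic ℝ (Fin n) := mem_rowStochastic_iff_sum.2 ⟨hWnn, hWrow⟩
  have hUW : ∀ i, ∑ j, |U i j - W i j| ≤ 2 * δ := fun i =>
    (sum_abs_sub_le_of_missing hW hc0 hcw hcd hd1 hU i).trans (by linarith [hd i])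
  have hδ : 2 * δ ≤ δ * (2 - δ) / (1 - δ) := by
    rw [le_div_iff₀ (sub_pos.2 hδ1)]
    nlinarith
  calc ∑ i, |influence α U i - influence α W i| ≤ (1 - α) * (2 * δ) / α :=
        sum_abs_influence_sub_le hW (mem_rowStochastic_of_missing hW hcw hcd hd1 hU) hα0 hα1.le
          (by positivity) hUW
    _ ≤ (1 - α) * (δ * (2 - δ) / (1 - δ)) / α := by gcongr
    _ = (δ / α) * ((1 - α) * (2 - δ) / (1 - δ)) := by ring
end

section
/- Let n > 2 and α ∈ (0,1). Define W by w_{1i} = w_{2i} = 1/(n-1) for i ≠ 1 (resp. i ≠ 2), w_{j1} = 1-δ and w_{j2} = δ for j > 2, all other entries 0; let U be obtained by setting δ = 0. Then the first coefficients of the influence vectors satisfy x - a = -(1-α)δ(n-2)(n-1)/(n(2n-3-α(n-2))), and the second coefficients satisfy y - b = (1-α)δ(n-2)(n-1)/(n(2n-3-α(n-2))). -/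
open Matrix BigOperators

namespace Matrix

variable {ι : Type*} [Fintype ι] [DecidableEq ι]

theorem one_sub_smul_transpose_mulVec {R : Type*} [CommRing R] (c : R) (W : Matrix ι ι R)
    (u : ι → R) :
    (1 - c • Wᵀ) *ᵥ u = u - c • (u ᵥ* W) := by
  rw [sub_mulVec, one_mulVec, smul_mulVec, mulVec_transpose]

theorem isUnit_det_one_sub_smul_transpose {W : Matrix ι ι ℝ} (hW : W ∈ rowStochastic ℝ ι)
    {c : ℝ} (hc : |c| < 1) : IsUnit (1 - c • Wᵀ).det := by
  rw [← transpose_one, ← transpose_smul, ← transpose_sub, det_transpose, isUnit_iff_ne_zero]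
  refine det_ne_zero_of_sum_row_lt_diag fun k => ?_
  have hoff : ∑ j ∈ Finset.univ.erase k, ‖(1 - c • W) k j‖ = |c| * (1 - W k k) := by
    rw [← sum_row_of_mem_rowStochastic hW k, ← Finset.add_sum_erase _ _ (Finset.mem_univ k),
      add_sub_cancel_left, Finset.mul_sum]
    refine Finset.sum_congr rfl fun j hj => ?_
    rw [sub_apply, one_apply_ne (Finset.ne_of_mem_erase hj).symm, smul_apply, smul_eq_mul,
      zero_sub, norm_neg, Real.norm_eq_abs, abs_mul, abs_of_nonneg (hW.1 k j)]
  have hdiag : 1 - |c| * W k k ≤ ‖(1 - c • W) k k‖ := by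
    rw [sub_apply, one_apply_eq, smul_apply, smul_eq_mul, Real.norm_eq_abs]
    calc 1 - |c| * W k k = |1| - |c * W k k| := by
          rw [abs_one, abs_mul, abs_of_nonneg (hW.1 k k)]
      _ ≤ |1 - c * W k k| := abs_sub_abs_le_abs_sub _ _
  rw [hoff]
  linarith

end Matrix

theorem influence_eq_of_mulVec_eq {n : ℕ} {α : ℝ} {W : Matrix (Fin n) (Fin n) ℝ}
    (hA : IsUnit (1 - (1 - α) • Wᵀ).det) {u : Fin n → ℝ}
    (hu : (1 - (1 - α) • Wᵀ) *ᵥ u = 1) : influence α W = (α / n) • u := by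
  rw [influence, show (fun _ => 1 : Fin n → ℝ) = 1 from rfl, ← hu, mulVec_mulVec,
    nonsing_inv_mul _ hA, one_mulVec]

/-- Firms `1, 2` of the construction are the indices `0, 1`; `U` is `hubMatrix n 0`. -/
noncomputable def hubMatrix (n : ℕ) (δ : ℝ) : Matrix (Fin n) (Fin n) ℝ :=
  of fun i j =>
    if i.val = 0 then (if j.val = 0 then 0 else 1 / ((n : ℝ) - 1))
    else if i.val = 1 then (if j.val = 1 then 0 else 1 / ((n : ℝ) - 1))
    else if j.val = 0 then 1 - δ else if j.val = 1 then δ else 0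

def hubVec {n : ℕ} (p q r : ℝ) : Fin n → ℝ :=
  fun i => if i.val = 0 then p else if i.val = 1 then q else r

section hub

variable {n : ℕ}

theorem smul_hubVec (c p q r : ℝ) :
    c • (hubVec p q r : Fin n → ℝ) = hubVec (c * p) (c * q) (c * r) := by
  funext i
  simp only [hubVec, Pi.smul_apply, smul_eq_mul]
  split_ifs <;> rfl

theorem hubVec_sub (p q r p' q' r' : ℝ) :
    (hubVec p q r - hubVec p' q' r' : Fin n → ℝ) = hubVec (p - p') (q - q') (r - r') := by
  funext i
  simp only [hubVec, Pi.sub_apply]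
  split_ifs <;> rfl

theorem hubVec_one : (hubVec 1 1 1 : Fin n → ℝ) = 1 := by
  funext i
  simp only [hubVec, Pi.one_apply]
  split_ifs <;> rfl

theorem hubMatrix_mem_rowStochastic (hn : 2 ≤ n) {δ : ℝ} (hδ0 : 0 ≤ δ) (hδ1 : δ ≤ 1) :
    hubMatrix n δ ∈ rowStochastic ℝ (Fin n) := by
  obtain ⟨m, rfl⟩ : ∃ m, n = m + 2 := ⟨n - 2, by omega⟩
  have hm : (m : ℝ) + 2 - 1 = m + 1 := by ring
  refine mem_rowStochastic_iff_sum.2 ⟨fun i j => ?_, fun i => ?_⟩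
  · simp only [hubMatrix, of_apply, Nat.cast_add, Nat.cast_ofNat, hm]
    split_ifs <;> positivity
  · refine Fin.cases ?_ (Fin.cases ?_ fun k => ?_) i <;> simp [hubMatrix, Fin.sum_univ_succ, hm]
    all_goals field_simp
    ring

theorem hubVec_vecMul_hubMatrix (hn : 2 ≤ n) (δ p q r : ℝ) :
    hubVec p q r ᵥ* hubMatrix n δ =
      hubVec (q / (n - 1) + (n - 2) * (1 - δ) * r) (p / (n - 1) + (n - 2) * δ * r)
        ((p + q) / (n - 1)) := by
  obtain ⟨m, rfl⟩ : ∃ m, n = m + 2 := ⟨n - 2, by omega⟩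
  funext i
  refine Fin.cases ?_ (Fin.cases ?_ fun k => ?_) i <;>
    simp [hubMatrix, hubVec, vecMul, dotProduct, Fin.sum_univ_succ] <;> ring

theorem influence_hubMatrix (hn : 2 ≤ n) {α δ : ℝ} (hα0 : 0 < α) (hα1 : α < 1) (hδ0 : 0 ≤ δ)
    (hδ1 : δ ≤ 1) :
    influence α (hubMatrix n δ) =
      hubVec ((n - 1) * (1 + (1 - α) * (n - 2) * (1 - δ)) / (n * (2 * n - 3 - α * (n - 2))))
        ((n - 1) * (1 + (1 - α) * (n - 2) * δ) / (n * (2 * n - 3 - α * (n - 2))))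
        ((n - α) / (n * (2 * n - 3 - α * (n - 2)))) := by
  have hn' : (2 : ℝ) ≤ n := by exact_mod_cast hn
  have hn1 : (n : ℝ) - 1 ≠ 0 := by linarith
  have hQ : 0 < 2 * (n : ℝ) - 3 - α * (n - 2) := by nlinarith
  obtain ⟨D, hD⟩ : ∃ D, D = α * (2 * (n : ℝ) - 3 - α * (n - 2)) := ⟨_, rfl⟩
  have hD0 : D ≠ 0 := hD ▸ (mul_pos hα0 hQ).ne'
  have hsolve : (1 - (1 - α) • (hubMatrix n δ)ᵀ) *ᵥ
      hubVec ((n - 1) * (1 + (1 - α) * (n - 2) * (1 - δ)) / D)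
        ((n - 1) * (1 + (1 - α) * (n - 2) * δ) / D) ((n - α) / D) = 1 := by
    rw [one_sub_smul_transpose_mulVec, hubVec_vecMul_hubMatrix hn, smul_hubVec, hubVec_sub,
      ← hubVec_one]
    congr 1 <;> field_simp <;> rw [hD] <;> ring
  have hα : |1 - α| < 1 := by rw [abs_lt]; constructor <;> linarith
  rw [influence_eq_of_mulVec_eq (isUnit_det_one_sub_smul_transpose
    (hubMatrix_mem_rowStochastic hn hδ0 hδ1) hα) hsolve, smul_hubVec, hD]
  have hn0 : (n : ℝ) ≠ 0 := by linarith
  congr 1 <;> field_simp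

end hub

/-- For the lower-bound construction `W` (rows `1,2` uniform, rows `j > 2` with
weight `1-δ` to firm `1` and `δ` to firm `2`) and `U` obtained by setting `δ = 0`,
the first two coordinates of the influence vectors differ by exactly
`∓(1-α)δ(n-2)(n-1)/(n(2n-3-α(n-2)))`. -/
theorem influence_difference_construction (n : ℕ) (hn : 2 < n) (α δ : ℝ)
    (hα0 : 0 < α) (hα1 : α < 1) (hδ0 : 0 ≤ δ) (hδ1 : δ < 1)
    (W U : Matrix (Fin n) (Fin n) ℝ)
    (hW : ∀ i j : Fin n, W i j =
      if i.val = 0 then (if j.val = 0 then 0 else 1 / ((n : ℝ) - 1))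
      else if i.val = 1 then (if j.val = 1 then 0 else 1 / ((n : ℝ) - 1))
      else if j.val = 0 then 1 - δ else if j.val = 1 then δ else 0)
    (hU : ∀ i j : Fin n, U i j =
      if i.val = 0 then (if j.val = 0 then 0 else 1 / ((n : ℝ) - 1))
      else if i.val = 1 then (if j.val = 1 then 0 else 1 / ((n : ℝ) - 1))
      else if j.val = 0 then 1 else 0) :
    influence α W ⟨0, by omega⟩ - influence α U ⟨0, by omega⟩ =
      -((1 - α) * δ * ((n : ℝ) - 2) * ((n : ℝ) - 1)) /
        ((n : ℝ) * (2 * (n : ℝ) - 3 - α * ((n : ℝ) - 2))) ∧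
    influence α W ⟨1, by omega⟩ - influence α U ⟨1, by omega⟩ =
      ((1 - α) * δ * ((n : ℝ) - 2) * ((n : ℝ) - 1)) /
        ((n : ℝ) * (2 * (n : ℝ) - 3 - α * ((n : ℝ) - 2))) := by
  have hWδ : W = hubMatrix n δ := ext hW
  have hU0 : U = hubMatrix n 0 := by
    ext i j
    rw [hU, hubMatrix, of_apply]
    split_ifs <;> simp
  rw [hWδ, hU0, influence_hubMatrix hn.le hα0 hα1 hδ0 hδ1.le,
    influence_hubMatrix hn.le hα0 hα1 le_rfl zero_le_one]
  constructor <;> simp only [hubVec, Nat.one_ne_zero, if_true, if_false, sub_zero, mul_one] <;>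
    ring
end

section
/- In a network of n ≥ 2 firms with row-stochastic input-output matrix W satisfying w_{ii} = 0 for all i, every coefficient of the influence vector v_W = (α/n)(I-(1-α)W')⁻¹𝟏 is at most (1 - α(n-1)/n)/(2-α). -/
open Matrix BigOperators

namespace Matrix

variable {ι : Type*} [Fintype ι] {M : Matrix ι ι ℝ}

theorem abs_mulVec_le (hM : ∀ i j, 0 ≤ M i j) (x : ι → ℝ) (i : ι) :
    |(M *ᵥ x) i| ≤ (M *ᵥ fun j => |x j|) i :=
  calc |(M *ᵥ x) i| ≤ ∑ j, |M i j * x j| := Finset.abs_sum_le_sum_abs _ _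
    _ = (M *ᵥ fun j => |x j|) i := by
      simp only [abs_mul, abs_of_nonneg (hM _ _), mulVec, dotProduct]

variable [DecidableEq ι]

theorem eq_zero_of_nonneg_of_le_smul_mulVec (hM : M ∈ colStochastic ℝ ι) {c : ℝ} (hc : c < 1)
    {f : ι → ℝ} (hf0 : 0 ≤ f) (hf : f ≤ c • M *ᵥ f) : f = 0 := by
  have hsum : ∑ i, f i ≤ c * ∑ i, f i :=
    calc ∑ i, f i ≤ ∑ i, (c • M *ᵥ f) i := Finset.sum_le_sum fun i _ => hf i
      _ = c * ∑ i, f i := by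
        simp only [Pi.smul_apply, smul_eq_mul, ← Finset.mul_sum, sum_mulVec_of_mem_colStochastic hM]
  have hpos : 0 ≤ ∑ i, f i := Finset.sum_nonneg fun i _ => hf0 i
  have hzero : ∑ i, f i = 0 := by nlinarith
  funext i
  exact (Finset.sum_eq_zero_iff_of_nonneg fun j _ => hf0 j).1 hzero i (Finset.mem_univ i)

theorem isUnit_det_one_sub_smul (hM : M ∈ colStochastic ℝ ι) {c : ℝ} (hc0 : 0 ≤ c) (hc1 : c < 1) :
    IsUnit (1 - c • M).det := by
  rw [isUnit_iff_ne_zero]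
  intro hdet
  obtain ⟨x, hx0, hx⟩ := exists_mulVec_eq_zero_iff.2 hdet
  have hfix : x = c • M *ᵥ x := by
    rwa [sub_mulVec, one_mulVec, smul_mulVec, sub_eq_zero] at hx
  have habs : (fun j => |x j|) = 0 := by
    refine eq_zero_of_nonneg_of_le_smul_mulVec hM hc1 (fun j => abs_nonneg _) fun i => ?_
    calc |x i| = c * |(M *ᵥ x) i| := by
          conv_lhs => rw [hfix]
          rw [Pi.smul_apply, smul_eq_mul, abs_mul, abs_of_nonneg hc0]
      _ ≤ c * (M *ᵥ fun j => |x j|) i :=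
        have hM0 : ∀ i j, 0 ≤ M i j := fun _ _ => nonneg_of_mem_colStochastic hM
        mul_le_mul_of_nonneg_left (abs_mulVec_le hM0 x i) hc0
  exact hx0 (funext fun j => abs_eq_zero.1 (congrFun habs j))

theorem nonneg_of_eq_add_smul_mulVec (hM : M ∈ colStochastic ℝ ι) {c : ℝ} (hc0 : 0 ≤ c)
    (hc1 : c < 1) {a v : ι → ℝ} (ha : 0 ≤ a) (hv : v = a + c • M *ᵥ v) : 0 ≤ v := by
  set f : ι → ℝ := fun i => max (-v i) 0
  have hf0 : 0 ≤ f := fun i => le_max_right _ _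
  have hMf : 0 ≤ M *ᵥ f := nonneg_mulVec_of_mem_colStochastic hM hf0
  have hMvf : 0 ≤ M *ᵥ v + M *ᵥ f := mulVec_add M v f ▸
    nonneg_mulVec_of_mem_colStochastic hM fun i => neg_le_iff_add_nonneg'.1 (le_max_left _ _)
  -- `-vᵢ = -aᵢ - c (M v)ᵢ ≤ c (M f)ᵢ`, so the negative part `f` of `v` satisfies `f ≤ c • M *ᵥ f`.
  have hf : f = 0 := by
    refine eq_zero_of_nonneg_of_le_smul_mulVec hM hc1 hf0 fun i => max_le ?_ ?_
    · have hvi := congrFun hv i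
      have hMvfi : 0 ≤ c * ((M *ᵥ v) i + (M *ᵥ f) i) := mul_nonneg hc0 (hMvf i)
      simp only [Pi.add_apply, Pi.smul_apply, smul_eq_mul] at hvi ⊢
      have hai : 0 ≤ a i := ha i
      linarith
    · exact mul_nonneg hc0 (hMf i)
  intro i
  simpa [f] using congrFun hf i

theorem sum_eq_of_eq_add_smul_mulVec (hM : M ∈ colStochastic ℝ ι) {c : ℝ} (hc : c ≠ 1)
    {a v : ι → ℝ} (hv : v = a + c • M *ᵥ v) : ∑ i, v i = (∑ i, a i) / (1 - c) := by
  have h : ∑ i, v i = ∑ i, a i + c * ∑ i, v i := by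
    conv_lhs => rw [hv]
    simp only [Pi.add_apply, Pi.smul_apply, smul_eq_mul, Finset.sum_add_distrib, ← Finset.mul_sum,
      sum_mulVec_of_mem_colStochastic hM]
  rw [eq_div_iff (sub_ne_zero.2 hc.symm)]
  linarith

theorem mulVec_apply_le_sum_sub (hM : M ∈ colStochastic ℝ ι) {v : ι → ℝ} (hv : 0 ≤ v) {i : ι}
    (hii : M i i = 0) : (M *ᵥ v) i ≤ ∑ j, v j - v i := by
  rw [← Finset.sum_erase_add _ _ (Finset.mem_univ i), mulVec, dotProduct,
    ← Finset.sum_erase_add _ _ (Finset.mem_univ i), hii, zero_mul, add_zero, add_sub_cancel_right]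
  exact Finset.sum_le_sum fun j _ => mul_le_of_le_one_left (hv j) (le_one_of_mem_colStochastic hM)

end Matrix

theorem influence_eq_add_smul_mulVec {n : ℕ} {α : ℝ} {W : Matrix (Fin n) (Fin n) ℝ}
    (h : IsUnit (1 - (1 - α) • Wᵀ).det) :
    influence α W = (fun _ => α / n) + (1 - α) • Wᵀ *ᵥ influence α W := by
  have hA : (1 - (1 - α) • Wᵀ) *ᵥ influence α W = fun _ => α / n := by
    rw [influence, mulVec_smul, mulVec_mulVec, mul_nonsing_inv _ h, one_mulVec]
    funext
    simp
  rw [← hA, sub_mulVec, one_mulVec, smul_mulVec]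
  abel

theorem influence_coefficient_upper_bound_general (n : ℕ) (α : ℝ)
    (hα0 : 0 < α) (hα1 : α < 1)
    (W : Matrix (Fin n) (Fin n) ℝ)
    (hnn : ∀ i j, 0 ≤ W i j) (hrow : ∀ i, ∑ j, W i j = 1)
    (hdiag : ∀ i, W i i = 0) :
    ∀ i, influence α W i ≤ (1 - α * ((n : ℝ) - 1) / (n : ℝ)) / (2 - α) := by
  intro i
  have hn : (0 : ℝ) < n := by exact_mod_cast i.pos
  have hW : Wᵀ ∈ colStochastic ℝ (Fin n) :=
    transpose_mem_colStochastic_iff_mem_rowStochastic.2 (mem_rowStochastic_iff_sum.2 ⟨hnn, hrow⟩)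
  have hv := influence_eq_add_smul_mulVec (isUnit_det_one_sub_smul hW (by linarith) (by linarith))
  set v := influence α W
  have hv0 : 0 ≤ v :=
    nonneg_of_eq_add_smul_mulVec hW (by linarith) (by linarith) (fun _ => by positivity) hv
  have hsum : ∑ j, v j = 1 := by
    rw [sum_eq_of_eq_add_smul_mulVec hW (by linarith) hv]
    simp only [Finset.sum_const, Finset.card_univ, Fintype.card_fin, nsmul_eq_mul, sub_sub_cancel]
    field_simp
  have hvi : v i = α / n + (1 - α) * (Wᵀ *ᵥ v) i := congrFun hv i
  have hle : (Wᵀ *ᵥ v) i ≤ 1 - v i := hsum ▸ mulVec_apply_le_sum_sub hW hv0 (hdiag i)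
  rw [le_div_iff₀ (by linarith)]
  calc v i * (2 - α) ≤ α / n + (1 - α) := by nlinarith
    _ = 1 - α * (n - 1) / n := by field_simp; ring

/-- Every coefficient of the influence vector of a row-stochastic matrix with zero
diagonal is at most `(1 - α(n-1)/n)/(2-α)`. -/
theorem influence_coefficient_upper_bound (n : ℕ) (hn : 2 ≤ n) (α : ℝ)
    (hα0 : 0 < α) (hα1 : α < 1)
    (W : Matrix (Fin n) (Fin n) ℝ)
    (hnn : ∀ i j, 0 ≤ W i j) (hrow : ∀ i, ∑ j, W i j = 1)
    (hdiag : ∀ i, W i i = 0) :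
    ∀ i, influence α W i ≤ (1 - α * ((n : ℝ) - 1) / (n : ℝ)) / (2 - α) :=
  influence_coefficient_upper_bound_general n α hα0 hα1 W hnn hrow hdiag
end

section
/- For n ≥ 2, the matrix W with w_{1i} = 1/(n-1) for all i ≥ 2, w_{i1} = 1 for all i ≥ 2, and all other entries zero, has influence vector whose first coefficient equals (1 - α(n-1)/n)/(2-α), so the upper bound on influence vector coefficients is attained. -/
/-!
The star network is row-stochastic, so for `β = 1 - α ∈ (0, 1)` the map `y ↦ β • (y ᵥ* W)`
contracts the `ℓ¹` norm and `1 - β • Wᵀ` is invertible. If `x` solves `(1 - β • Wᵀ) x = 1`, each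
leaf equation reads `x_i = 1 + β x_0 / (n - 1)`; substituting into the hub equation
`x_0 - β ∑_{i ≠ 0} x_i = 1` gives `x_0 (1 - β²) = 1 + β (n - 1)`, and `1 - β² = α (2 - α)`.
-/

open Matrix BigOperators

namespace Matrix

variable {ι : Type*} [Fintype ι] {W : Matrix ι ι ℝ}

theorem sum_abs_le_of_eq_smul_vecMul (hW : ∀ i j, 0 ≤ W i j) (hrow : ∀ i, ∑ j, W i j ≤ 1)
    {β : ℝ} {y : ι → ℝ} (hy : y = β • (y ᵥ* W)) : ∑ i, |y i| ≤ |β| * ∑ i, |y i| := by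
  calc ∑ i, |y i| = |β| * ∑ i, |∑ j, y j * W j i| := by
        rw [Finset.mul_sum]; congr! 1 with i
        rw [← abs_mul]; exact congrArg (|·|) (congrFun hy i)
    _ ≤ |β| * ∑ i, ∑ j, |y j| * W j i := by
        gcongr with i
        exact (Finset.abs_sum_le_sum_abs _ _).trans_eq
          (Finset.sum_congr rfl fun j _ => by rw [abs_mul, abs_of_nonneg (hW j i)])
    _ = |β| * ∑ j, |y j| * ∑ i, W j i := by rw [Finset.sum_comm]; simp only [Finset.mul_sum]
    _ ≤ |β| * ∑ j, |y j| := by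
        gcongr with j
        exact mul_le_of_le_one_right (abs_nonneg _) (hrow j)

theorem isUnit_one_sub_smul_transpose [DecidableEq ι] (hW : ∀ i j, 0 ≤ W i j)
    (hrow : ∀ i, ∑ j, W i j ≤ 1) {β : ℝ} (hβ : |β| < 1) : IsUnit (1 - β • Wᵀ) := by
  rw [← mulVec_injective_iff_isUnit]
  intro y z hyz
  set d := y - z
  have hd : d = β • (d ᵥ* W) := by
    have : (1 - β • Wᵀ) *ᵥ d = 0 := by rw [mulVec_sub, hyz, sub_self]
    rwa [sub_mulVec, one_mulVec, smul_mulVec, mulVec_transpose, sub_eq_zero] at this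
  have hsum : ∑ i, |d i| ≤ 0 := by
    have := sum_abs_le_of_eq_smul_vecMul hW hrow hd
    nlinarith [Finset.sum_nonneg fun i (_ : i ∈ Finset.univ) => abs_nonneg (d i)]
  funext i
  have hdi : |d i| ≤ 0 :=
    (Finset.single_le_sum (fun j _ => abs_nonneg (d j)) (Finset.mem_univ i)).trans hsum
  exact sub_eq_zero.mp (abs_nonpos_iff.mp hdi)

end Matrix

noncomputable def starNetwork (n : ℕ) : Matrix (Fin n) (Fin n) ℝ :=
  of fun i j => if i.val = 0 then (if j.val = 0 then 0 else 1 / ((n : ℝ) - 1))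
    else if j.val = 0 then 1 else 0

section StarNetwork

variable {m : ℕ}

theorem starNetwork_nonneg (i j : Fin (m + 1)) : 0 ≤ starNetwork (m + 1) i j := by
  simp only [starNetwork, of_apply, Nat.cast_add_one, add_sub_cancel_right]
  split_ifs <;> positivity

theorem starNetwork_sum_row_le_one (i : Fin (m + 1)) : ∑ j, starNetwork (m + 1) i j ≤ 1 := by
  cases i using Fin.cases with
  | zero => simpa [starNetwork, Fin.sum_univ_succ] using mul_inv_le_one
  | succ i => simp [starNetwork]

theorem transpose_starNetwork_mulVec_zero (x : Fin (m + 1) → ℝ) :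
    ((starNetwork (m + 1))ᵀ *ᵥ x) 0 = ∑ k : Fin m, x k.succ := by
  simp [starNetwork, mulVec, dotProduct, Fin.sum_univ_succ]

theorem transpose_starNetwork_mulVec_succ (x : Fin (m + 1) → ℝ) (k : Fin m) :
    ((starNetwork (m + 1))ᵀ *ᵥ x) k.succ = x 0 / m := by
  simp [starNetwork, mulVec, dotProduct, div_eq_inv_mul]

theorem starNetwork_hub_mul_one_sub_sq (hm : m ≠ 0) {β : ℝ} {x : Fin (m + 1) → ℝ}
    (hx : (1 - β • (starNetwork (m + 1))ᵀ) *ᵥ x = 1) : x 0 * (1 - β ^ 2) = 1 + β * m := by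
  have hentry (i) : x i - β * ((starNetwork (m + 1))ᵀ *ᵥ x) i = 1 := by
    simpa [sub_mulVec, smul_mulVec] using congrFun hx i
  have hleaf (k : Fin m) : x k.succ = 1 + β * (x 0 / m) := by
    have := hentry k.succ
    rw [transpose_starNetwork_mulVec_succ] at this
    linarith
  have hhub := hentry 0
  rw [transpose_starNetwork_mulVec_zero, Finset.sum_congr rfl fun k _ => hleaf k] at hhub
  simp only [Finset.sum_const, Finset.card_univ, Fintype.card_fin, nsmul_eq_mul] at hhub
  field_simp at hhub
  linear_combination hhub

end StarNetwork

/-- The star network (`w_{1i} = 1/(n-1)`, `w_{i1} = 1` for `i ≥ 2`) attains the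
maximum possible influence coefficient `(1 - α(n-1)/n)/(2-α)` at the hub. -/
theorem influence_upper_bound_attained (n : ℕ) (hn : 2 ≤ n) (α : ℝ)
    (hα0 : 0 < α) (hα1 : α < 1)
    (W : Matrix (Fin n) (Fin n) ℝ)
    (hW : ∀ i j : Fin n, W i j =
      if i.val = 0 then (if j.val = 0 then 0 else 1 / ((n : ℝ) - 1))
      else if j.val = 0 then 1 else 0) :
    influence α W ⟨0, by omega⟩ = (1 - α * ((n : ℝ) - 1) / (n : ℝ)) / (2 - α) := by
  obtain ⟨m, rfl⟩ : ∃ m, n = m + 1 := ⟨n - 1, by omega⟩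
  obtain rfl : W = starNetwork (m + 1) := Matrix.ext hW
  set x : Fin (m + 1) → ℝ := (1 - (1 - α) • (starNetwork (m + 1))ᵀ)⁻¹ *ᵥ fun _ => 1
  have hunit : IsUnit (1 - (1 - α) • (starNetwork (m + 1))ᵀ) :=
    isUnit_one_sub_smul_transpose starNetwork_nonneg starNetwork_sum_row_le_one
      (abs_lt.mpr ⟨by linarith, by linarith⟩)
  have hx : (1 - (1 - α) • (starNetwork (m + 1))ᵀ) *ᵥ x = 1 := by
    rw [mulVec_mulVec, mul_nonsing_inv _ ((isUnit_iff_isUnit_det _).mp hunit), one_mulVec]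
    rfl
  have hhub := starNetwork_hub_mul_one_sub_sq (by omega) hx
  show α / ((m + 1 : ℕ) : ℝ) * x 0 = _
  push_cast
  have h2α : (2 : ℝ) - α ≠ 0 := by linarith
  field_simp
  linear_combination hhub
end

section
/- Every coefficient of the influence vector v_W = (α/n)(I-(1-α)W')⁻¹𝟏 of a row-stochastic n×n matrix W is at least α/n; moreover for n ≥ 3 this bound is attained: the matrix W with w_{12} = 1, w_{i1} = 1 for all i ≥ 2, and all other entries 0 has influence vector coefficients equal to α/n for all indices i ≥ 3. -/
/-!
Write `c = 1 - α`. A row-stochastic `W` has `‖c • W‖ ≤ c < 1` in the `ℓ∞` operator norm, so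
`1 - c • W` is invertible with Neumann series `∑ₖ (c • W)ᵏ`: a sum of entrywise nonnegative
matrices whose `k = 0` term is the identity. Hence every column sum of `(1 - c • W)⁻¹`, i.e.
every coefficient of `(1 - c • Wᵀ)⁻¹ 𝟏`, is at least `1`.

In the extremal network nobody buys from node `i ≥ 3`, so the `i`-th column of `W` vanishes and
the `i`-th coordinate of `v = 𝟏 + c • Wᵀ v` reads `v i = 1`.
-/

open Matrix BigOperators

namespace Matrix

variable {n : Type*} [Fintype n] [DecidableEq n]

section LinftyOpNorm

attribute [local instance] Matrix.linftyOpNormedRing Matrix.linftyOpNormedAlgebra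

lemma linfty_opNorm_le_one_of_mem_rowStochastic {W : Matrix n n ℝ}
    (hW : W ∈ rowStochastic ℝ n) : ‖W‖ ≤ 1 := by
  rw [← NNReal.coe_one, ← coe_nnnorm, NNReal.coe_le_coe, linfty_opNNNorm_def]
  refine Finset.sup_le fun i _ => ?_
  rw [← NNReal.coe_le_coe]
  push_cast [coe_nnnorm]
  rw [Finset.sum_congr rfl fun j _ => Real.norm_of_nonneg (nonneg_of_mem_rowStochastic hW),
    sum_row_of_mem_rowStochastic hW i]

lemma one_apply_le_inv_one_sub_apply {T : Matrix n n ℝ} (hT : ∀ i j, 0 ≤ T i j) (hT1 : ‖T‖ < 1)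
    (i j : n) : (1 : Matrix n n ℝ) i j ≤ (1 - T)⁻¹ i j := by
  have hsum : HasSum (fun k => T ^ k) (1 - T)⁻¹ := by
    rw [inv_eq_left_inv (geom_series_mul_neg T hT1)]
    exact (summable_geometric_of_norm_lt_one hT1).hasSum
  have hij : HasSum (fun k => (T ^ k) i j) ((1 - T)⁻¹ i j) :=
    Pi.hasSum.1 (Pi.hasSum.1 hsum i) j
  simpa using le_hasSum hij 0 fun k _ => pow_apply_nonneg hT k i j

lemma norm_smul_lt_one_of_mem_rowStochastic {W : Matrix n n ℝ} (hW : W ∈ rowStochastic ℝ n)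
    {c : ℝ} (hc : |c| < 1) : ‖c • W‖ < 1 :=
  calc ‖c • W‖ ≤ ‖c‖ * ‖W‖ := norm_smul_le c W
    _ ≤ |c| * 1 := by gcongr; exacts [le_rfl, linfty_opNorm_le_one_of_mem_rowStochastic hW]
    _ < 1 := by rwa [mul_one]

lemma isUnit_det_one_sub_smul_of_mem_rowStochastic {W : Matrix n n ℝ}
    (hW : W ∈ rowStochastic ℝ n) {c : ℝ} (hc : |c| < 1) : IsUnit (1 - c • W).det :=
  (isUnit_iff_isUnit_det _).1 <|
    isUnit_one_sub_of_norm_lt_one (norm_smul_lt_one_of_mem_rowStochastic hW hc)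

lemma one_apply_le_inv_one_sub_smul_apply {W : Matrix n n ℝ} (hW : W ∈ rowStochastic ℝ n)
    {c : ℝ} (hc0 : 0 ≤ c) (hc1 : c < 1) (i j : n) :
    (1 : Matrix n n ℝ) i j ≤ (1 - c • W)⁻¹ i j :=
  one_apply_le_inv_one_sub_apply (fun i j => mul_nonneg hc0 (nonneg_of_mem_rowStochastic hW))
    (norm_smul_lt_one_of_mem_rowStochastic hW (abs_lt.2 ⟨by linarith, hc1⟩)) i j

end LinftyOpNorm

lemma of_ite_eq_mem_rowStochastic (f : n → n) :
    (of fun i j => if j = f i then (1 : ℝ) else 0) ∈ rowStochastic ℝ n := by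
  refine (mem_rowStochastic_iff_sum).2 ⟨fun i j => ?_, fun i => ?_⟩
  · simp only [of_apply]; split_ifs <;> norm_num
  · simp

end Matrix

lemma influence_apply {n : ℕ} (α : ℝ) (W : Matrix (Fin n) (Fin n) ℝ) (i : Fin n) :
    influence α W i = α / n * ∑ j, (1 - (1 - α) • W)⁻¹ j i := by
  have hT : 1 - (1 - α) • Wᵀ = (1 - (1 - α) • W)ᵀ := by
    rw [transpose_sub, transpose_one, transpose_smul]
  rw [influence, hT, ← transpose_nonsing_inv]
  simp [mulVec, dotProduct]

variable {n : ℕ} {α : ℝ} {W : Matrix (Fin n) (Fin n) ℝ}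

lemma div_le_influence_apply (hα0 : 0 < α) (hα1 : α ≤ 1) (hW : W ∈ rowStochastic ℝ (Fin n))
    (i : Fin n) : α / n ≤ influence α W i := by
  have hcol : 1 ≤ ∑ j, (1 - (1 - α) • W)⁻¹ j i :=
    calc 1 = ∑ j, (1 : Matrix (Fin n) (Fin n) ℝ) j i := by simp [one_apply]
      _ ≤ _ := Finset.sum_le_sum fun j _ =>
        one_apply_le_inv_one_sub_smul_apply hW (by linarith) (by linarith) j i
  rw [influence_apply]
  exact le_mul_of_one_le_right (by positivity) hcol

lemma influence_apply_eq_of_col_eq_zero (hW : W ∈ rowStochastic ℝ (Fin n)) (hα : |1 - α| < 1)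
    {i : Fin n} (hcol : ∀ j, W j i = 0) : influence α W i = α / n := by
  rw [influence, Pi.smul_apply, smul_eq_mul]
  set M := 1 - (1 - α) • Wᵀ
  have hdet : IsUnit M.det := by
    rw [← det_transpose, transpose_sub, transpose_one, transpose_smul, transpose_transpose]
    exact isUnit_det_one_sub_smul_of_mem_rowStochastic hW hα
  set v := M⁻¹ *ᵥ fun _ => (1 : ℝ)
  have hv : M *ᵥ v = fun _ => 1 := by
    rw [mulVec_mulVec, mul_nonsing_inv M hdet, one_mulVec]
  have hvi : v i = 1 := by
    simpa [M, sub_mulVec, smul_mulVec, mulVec_transpose, vecMul, dotProduct, hcol]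
      using congrFun hv i
  rw [hvi, mul_one]

theorem influence_coefficient_lower_bound_general (n : ℕ) (α : ℝ)
    (hα0 : 0 < α) (hα1 : α < 1) :
    (∀ W : Matrix (Fin n) (Fin n) ℝ, (∀ i j, 0 ≤ W i j) → (∀ i, ∑ j, W i j = 1) →
      (∀ i, W i i = 0) → ∀ i, α / (n : ℝ) ≤ influence α W i) ∧
    (∀ W : Matrix (Fin n) (Fin n) ℝ,
      (∀ i j : Fin n, W i j =
        if i.val = 0 then (if j.val = 1 then 1 else 0)
        else if j.val = 0 then 1 else 0) →
      ∀ i : Fin n, 2 ≤ i.val → influence α W i = α / (n : ℝ)) := by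
  refine ⟨fun W hnonneg hrow _ i =>
    div_le_influence_apply hα0 hα1.le (mem_rowStochastic_iff_sum.2 ⟨hnonneg, hrow⟩) i,
    fun W hW i hi => ?_⟩
  have h1n : 1 < n := by omega
  set f : Fin n → Fin n := fun k => if k.val = 0 then ⟨1, h1n⟩ else ⟨0, by omega⟩
  have hWf : W = of fun k j => if j = f k then 1 else 0 := by
    ext k j
    rw [hW]
    by_cases hk : k.val = 0 <;> simp [f, hk, Fin.ext_iff]
  refine influence_apply_eq_of_col_eq_zero (hWf ▸ of_ite_eq_mem_rowStochastic f)
    (abs_lt.2 ⟨by linarith, by linarith⟩) fun j => ?_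
  rw [hW]
  simp [show i.val ≠ 0 by omega, show i.val ≠ 1 by omega]

/-- Every coefficient of the influence vector of a row-stochastic matrix with zero
diagonal is at least `α/n`; moreover for `n ≥ 3` this is attained for the network
with `w_{12} = 1` and `w_{i1} = 1` for `i ≥ 2` at every index `i ≥ 3`. -/
theorem influence_coefficient_lower_bound (n : ℕ) (hn : 3 ≤ n) (α : ℝ)
    (hα0 : 0 < α) (hα1 : α < 1) :
    (∀ W : Matrix (Fin n) (Fin n) ℝ, (∀ i j, 0 ≤ W i j) → (∀ i, ∑ j, W i j = 1) →
      (∀ i, W i i = 0) → ∀ i, α / (n : ℝ) ≤ influence α W i) ∧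
    (∀ W : Matrix (Fin n) (Fin n) ℝ,
      (∀ i j : Fin n, W i j =
        if i.val = 0 then (if j.val = 1 then 1 else 0)
        else if j.val = 0 then 1 else 0) →
      ∀ i : Fin n, 2 ≤ i.val → influence α W i = α / (n : ℝ)) :=
  influence_coefficient_lower_bound_general n α hα0 hα1
end

section
/- Consider the network J on n > 3 vertices with connectivity matrix X given by x_{1j} = 1/(n-1) for j > 1, x_{i(i-1)} = 1 for i > 1, and all other entries zero. Its influence vector (p₁,…,p_n) satisfies p_{n-i} = (1/α - (1-α)^{i+1}/α)·p_n for 0 ≤ i < n-1, and p_n = (1 - α/n)α² / (-α² + (1-α)^{n+1} + αn + α - 1). -/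
/-!
The influence vector `p` solves `p = α/n • 𝟙 + (1 - α) • Xᵀ p`, and `1 - (1 - α) • Xᵀ` is
invertible since `X` is row stochastic, which makes its columns strictly diagonally dominant.
For the chain with a hub, writing `β = 1 - α` and `c = α/n + β p₁/(n-1)`, the system reads
`p_n = c` and `p_k = c + β p_{k+1}` for `1 < k < n`, so `p_{n-i} = c (1 + β + ⋯ + β^i)`.
Closing the loop through `p₁ = α/n + β p₂` gives a linear equation for `c = p_n`, whose
coefficient is positive by Bernoulli's inequality.
-/

open Matrix BigOperators

theorem mulVec_influence {n : ℕ} (α : ℝ) (W : Matrix (Fin n) (Fin n) ℝ)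
    (hW : IsUnit (1 - (1 - α) • Wᵀ).det) :
    (1 - (1 - α) • Wᵀ) *ᵥ influence α W = fun _ => α / n := by
  rw [influence, mulVec_smul, mulVec_mulVec, mul_nonsing_inv _ hW, one_mulVec]
  ext
  simp

theorem isUnit_det_one_sub_smul_transpose_of_mem_rowStochastic {ι : Type*} [Fintype ι]
    [DecidableEq ι] {W : Matrix ι ι ℝ} (hW : W ∈ rowStochastic ℝ ι) {β : ℝ} (hβ0 : 0 ≤ β)
    (hβ1 : β < 1) :
    IsUnit (1 - β • Wᵀ).det := by
  refine isUnit_iff_ne_zero.mpr (det_ne_zero_of_sum_col_lt_diag fun k => ?_)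
  have hdiag : ‖(1 - β • Wᵀ) k k‖ = 1 - β * W k k := by
    have : β * W k k < 1 := by nlinarith [le_one_of_mem_rowStochastic hW (i := k) (j := k)]
    simp [Real.norm_eq_abs, abs_of_pos (sub_pos.mpr this)]
  have hoff : ∑ i ∈ Finset.univ.erase k, ‖(1 - β • Wᵀ) i k‖ = β * (1 - W k k) := by
    rw [← sum_row_of_mem_rowStochastic hW k, ← Finset.add_sum_erase _ _ (Finset.mem_univ k),
      add_sub_cancel_left, Finset.mul_sum]
    refine Finset.sum_congr rfl fun i hi => ?_
    simp [Real.norm_eq_abs, one_apply_ne (Finset.ne_of_mem_erase hi), abs_of_nonneg hβ0,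
      nonneg_of_mem_rowStochastic hW]
  rw [hdiag, hoff]
  linarith

theorem Fin.sum_ite_val_eq {M : Type*} [AddCommMonoid M] {n : ℕ} (f : Fin n → M) (m : ℕ) :
    ∑ j : Fin n, (if j.val = m then f j else 0) = if h : m < n then f ⟨m, h⟩ else 0 := by
  split_ifs with h
  · rw [Finset.sum_eq_single ⟨m, h⟩ (fun j _ hj => if_neg fun hjm => hj (Fin.ext hjm))
      (by simp), if_pos rfl]
  · exact Finset.sum_eq_zero fun j _ => if_neg fun (hj : j.val = m) => h (hj ▸ j.isLt)

theorem eq_mul_geom_sum_of_recurrence {r : ℕ → ℝ} {c β : ℝ} {N : ℕ} (h0 : r 0 = c)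
    (hs : ∀ i, i + 1 < N → r (i + 1) = c + β * r i) :
    ∀ i < N, r i = c * ∑ j ∈ Finset.range (i + 1), β ^ j := by
  intro i hi
  induction i with
  | zero => simp [h0]
  | succ i ih => rw [hs i hi, ih (by omega), geom_sum_succ (n := i + 1)]; ring

/-- The network `J`, with vertex `i + 1` of the paper as `i : Fin n`; row `0` is the hub. -/
noncomputable def chainHub (n : ℕ) : Matrix (Fin n) (Fin n) ℝ :=
  of fun i j => if i.val = 0 then (if j.val = 0 then 0 else 1 / ((n : ℝ) - 1))
    else if j.val + 1 = i.val then 1 else 0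

theorem chainHub_mem_rowStochastic {n : ℕ} (hn : 2 ≤ n) :
    chainHub n ∈ rowStochastic ℝ (Fin n) := by
  have hn1 : (0 : ℝ) < n - 1 := by
    have : (2 : ℝ) ≤ n := by exact_mod_cast hn
    linarith
  refine mem_rowStochastic_iff_sum.mpr ⟨fun i j => ?_, fun i => ?_⟩
  · simp only [chainHub, of_apply]
    split_ifs <;> positivity
  · by_cases hi : i.val = 0
    · have hrow : ∀ j : Fin n, chainHub n i j =
          1 / ((n : ℝ) - 1) - if j.val = 0 then 1 / ((n : ℝ) - 1) else 0 := fun j => by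
        simp only [chainHub, of_apply, if_pos hi]
        split_ifs <;> ring
      rw [Finset.sum_congr rfl fun j _ => hrow j, Finset.sum_sub_distrib, Fin.sum_ite_val_eq,
        dif_pos (by omega), Finset.sum_const, Finset.card_univ, Fintype.card_fin, nsmul_eq_mul]
      field_simp
    · have hrow : ∀ j : Fin n, chainHub n i j = if j.val = i.val - 1 then 1 else 0 := fun j => by
        simp only [chainHub, of_apply, if_neg hi]
        exact if_congr (by omega) rfl rfl
      rw [Finset.sum_congr rfl fun j _ => hrow j, Fin.sum_ite_val_eq, dif_pos (by omega)]

theorem chainHub_transpose_mulVec_apply {n : ℕ} (u : Fin n → ℝ) (k : Fin n) :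
    ((chainHub n)ᵀ *ᵥ u) k = (if k.val = 0 then 0 else u ⟨0, k.pos⟩ / ((n : ℝ) - 1)) +
      if h : k.val + 1 < n then u ⟨k.val + 1, h⟩ else 0 := by
  have hterm : ∀ j : Fin n, chainHub n j k * u j =
      (if j.val = 0 then (if k.val = 0 then 0 else u j / ((n : ℝ) - 1)) else 0) +
        if j.val = k.val + 1 then u j else 0 := fun j => by
    simp only [chainHub, of_apply]
    split_ifs <;> first | omega | ring
  simp only [mulVec, dotProduct, transpose_apply]
  rw [Finset.sum_congr rfl fun j _ => hterm j, Finset.sum_add_distrib, Fin.sum_ite_val_eq,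
    Fin.sum_ite_val_eq, dif_pos k.pos]

theorem influence_chainHub_apply {n : ℕ} (hn : 2 ≤ n) {α : ℝ} (hα0 : 0 < α) (hα1 : α < 1)
    (k : Fin n) :
    influence α (chainHub n) k = α / n + (1 - α) *
      ((if k.val = 0 then 0 else influence α (chainHub n) ⟨0, k.pos⟩ / ((n : ℝ) - 1)) +
        if h : k.val + 1 < n then influence α (chainHub n) ⟨k.val + 1, h⟩ else 0) := by
  have hdet := isUnit_det_one_sub_smul_transpose_of_mem_rowStochastic
    (chainHub_mem_rowStochastic hn) (β := 1 - α) (by linarith) (by linarith)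
  have h := congrFun (mulVec_influence α _ hdet) k
  rw [sub_mulVec, one_mulVec, smul_mulVec, Pi.sub_apply, Pi.smul_apply,
    chainHub_transpose_mulVec_apply, smul_eq_mul] at h
  linarith

theorem influence_chainHub_eq_mul_geom_sum {n : ℕ} (hn : 2 ≤ n) {α : ℝ} (hα0 : 0 < α)
    (hα1 : α < 1) :
    ∀ i < n - 1, influence α (chainHub n) ⟨n - 1 - i, by omega⟩ =
      influence α (chainHub n) ⟨n - 1, by omega⟩ * ∑ j ∈ Finset.range (i + 1), (1 - α) ^ j := by
  refine eq_mul_geom_sum_of_recurrence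
    (r := fun i => influence α (chainHub n) ⟨n - 1 - i, by omega⟩) rfl fun i hi => ?_
  have hlast := influence_chainHub_apply hn hα0 hα1 ⟨n - 1, by omega⟩
  have hmid := influence_chainHub_apply hn hα0 hα1 ⟨n - 1 - (i + 1), by omega⟩
  simp only at hlast hmid ⊢
  rw [if_neg (by omega), dif_neg (by omega)] at hlast
  rw [if_neg (by omega), dif_pos (by omega)] at hmid
  simp only [show n - 1 - (i + 1) + 1 = n - 1 - i by omega] at hmid
  rw [hmid, hlast]
  ring

theorem chainHub_denominator_pos {n : ℕ} (hn : 2 ≤ n) {α : ℝ} (hα0 : 0 < α) (hα1 : α < 1) :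
    0 < -α ^ 2 + (1 - α) ^ (n + 1) + α * n + α - 1 := by
  obtain ⟨m, rfl⟩ := Nat.exists_eq_add_of_le' hn
  have hbern := one_add_mul_le_pow (show (-2 : ℝ) ≤ -α by linarith) (m + 1)
  push_cast at hbern ⊢
  have hβ : 0 < (1 - α) ^ 2 := by positivity
  rw [← sub_eq_add_neg] at hbern
  rw [show m + 2 + 1 = 2 + (m + 1) by ring, pow_add]
  have hpos : 0 < ((m : ℝ) + 1) * α * (1 - (1 - α) ^ 2) :=
    mul_pos (mul_pos (by positivity) hα0) (by nlinarith)
  nlinarith [mul_le_mul_of_nonneg_left hbern hβ.le]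

theorem influence_chainHub_last_mul_eq {n : ℕ} (hn : 2 ≤ n) {α : ℝ} (hα0 : 0 < α)
    (hα1 : α < 1) :
    influence α (chainHub n) ⟨n - 1, by omega⟩ * (-α ^ 2 + (1 - α) ^ (n + 1) + α * n + α - 1) =
      (1 - α / n) * α ^ 2 := by
  have hlast := influence_chainHub_apply hn hα0 hα1 ⟨n - 1, by omega⟩
  have hfirst := influence_chainHub_apply hn hα0 hα1 ⟨0, by omega⟩
  have hsecond := influence_chainHub_eq_mul_geom_sum hn hα0 hα1 (n - 2) (by omega)
  simp only [if_true, zero_add] at hlast hfirst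
  rw [if_neg (by omega), dif_neg (by omega)] at hlast
  rw [dif_pos (by omega)] at hfirst
  simp only [show n - 1 - (n - 2) = 1 by omega, show n - 2 + 1 = n - 1 by omega] at hsecond
  have hgeom := mul_neg_geom_sum (1 - α) (n - 1)
  have hn0 : (n : ℝ) ≠ 0 := by positivity
  have hn1 : (n : ℝ) - 1 ≠ 0 := by
    have : (2 : ℝ) ≤ n := by exact_mod_cast hn
    linarith
  rw [show n + 1 = n - 1 + 2 by omega, pow_add]
  field_simp at hlast hfirst ⊢
  linear_combination α * hlast + α * (1 - α) * hfirst + α * (1 - α) ^ 2 * n * hsecond +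
    (1 - α) ^ 2 * influence α (chainHub n) ⟨n - 1, by omega⟩ * n * hgeom

/-- For the chain-with-hub network `J` (`x_{1j} = 1/(n-1)` for `j > 1` and
`x_{i,i-1} = 1` for `i > 1`), the influence vector satisfies
`p_{n-i} = (1/α - (1-α)^{i+1}/α)·p_n` for `0 ≤ i < n-1` and
`p_n = (1 - α/n)α² / (-α² + (1-α)^{n+1} + αn + α - 1)`. -/
theorem influence_chain_hub (n : ℕ) (hn : 3 < n) (α : ℝ) (hα0 : 0 < α) (hα1 : α < 1)
    (X : Matrix (Fin n) (Fin n) ℝ)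
    (hX : ∀ i j : Fin n, X i j =
      if i.val = 0 then (if j.val = 0 then 0 else 1 / ((n : ℝ) - 1))
      else if j.val + 1 = i.val then 1 else 0) :
    (∀ i : ℕ, i < n - 1 →
      influence α X ⟨n - 1 - i, by omega⟩ =
        (1 / α - (1 - α) ^ (i + 1) / α) * influence α X ⟨n - 1, by omega⟩) ∧
    influence α X ⟨n - 1, by omega⟩ =
      (1 - α / (n : ℝ)) * α ^ 2 /
        (-α ^ 2 + (1 - α) ^ (n + 1) + α * (n : ℝ) + α - 1) := by
  obtain rfl : X = chainHub n := Matrix.ext hX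
  have hn2 : 2 ≤ n := by omega
  refine ⟨fun i hi => ?_, ?_⟩
  · rw [influence_chainHub_eq_mul_geom_sum hn2 hα0 hα1 i hi,
      geom_sum_eq (by linarith : 1 - α ≠ 1)]
    ring
  · rw [eq_div_iff (chainHub_denominator_pos hn2 hα0 hα1).ne']
    exact influence_chainHub_last_mul_eq hn2 hα0 hα1
end
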